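/- arXiv:1507.03182 — 5 statements merged into one kernel-verified Lean document; each statement's English description precedes it below -/
import Mathlib

section
/- Let f ∈ F₂[x] be nonconstant with irreducible factorization f = f₁^{n₁}·…·f_r^{n_r} where the f_i are pairwise distinct irreducibles. Suppose f₃ is an irreducible factor of f that is not x and not x+1, and let h = f / f₃^{α} for some α ≥ 1 with f₃^α ∣ f. Then gcd(h + 1, f) = 1 or gcd(x·h + 1, f) = 1. -/
open Polynomial

private lemma zmod2_eq_one (r : ZMod 2) (h0 : r ≠ 0) : r = 1 := by revert h0; revert r; decide

private lemma unit_eq_one (u : (ZMod 2)[X]) (hu : IsUnit u) : u = 1 := by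
  obtain ⟨r, hr, rfl⟩ := Polynomial.isUnit_iff.mp hu
  rw [zmod2_eq_one r hr.ne_zero, map_one]

theorem stmt6 (f f3 h : (ZMod 2)[X]) (hf : 0 < f.degree)
    (hirr : Irreducible f3) (hne1 : f3 ≠ X) (hne2 : f3 ≠ X + 1)
    (α : ℕ) (hα : 1 ≤ α) (hfac : f = f3 ^ α * h) (hcop : ¬ f3 ∣ h) :
    EuclideanDomain.gcd (h + 1) f = 1 ∨ EuclideanDomain.gcd (X * h + 1) f = 1 := by
  have key : ¬ f3 ∣ (h + 1) ∨ ¬ f3 ∣ (X * h + 1) := by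
    by_contra hc
    push_neg at hc
    obtain ⟨h1, h2⟩ := hc
    have hdvd : f3 ∣ X + 1 := by
      have : X + 1 = X * (h + 1) + (X * h + 1) := by
        ring_nf
        simp [CharTwo.two_eq_zero]
      rw [this]
      exact dvd_add (Dvd.dvd.mul_left h1 X) h2
    -- f3 divides the irreducible X + 1, hence equals it
    have hXirr : Irreducible (X + 1 : (ZMod 2)[X]) := by
      have := Polynomial.irreducible_X_sub_C (1 : ZMod 2)
      simpa [CharTwo.sub_eq_add] using this
    obtain ⟨q, hq⟩ := hdvd
    rcases hXirr.isUnit_or_isUnit hq with hu | hu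
    · exact hirr.not_isUnit hu
    · rw [unit_eq_one q hu, mul_one] at hq
      exact hne2 hq.symm
  have hcop1 : IsCoprime (h + 1) h := ⟨1, 1, by ring_nf; simp [CharTwo.two_eq_zero]⟩
  have hcop2 : IsCoprime (X * h + 1) h := ⟨1, X, by ring_nf; simp [CharTwo.two_eq_zero]⟩
  rcases key with hk | hk
  · left
    have : IsCoprime (h + 1) f := by
      rw [hfac]
      exact IsCoprime.mul_right ((hirr.coprime_iff_not_dvd.mpr hk).symm.pow_right) hcop1
    exact unit_eq_one _ ((EuclideanDomain.gcd_isUnit_iff).mpr this)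
  · right
    have : IsCoprime (X * h + 1) f := by
      rw [hfac]
      exact IsCoprime.mul_right ((hirr.coprime_iff_not_dvd.mpr hk).symm.pow_right) hcop2
    exact unit_eq_one _ ((EuclideanDomain.gcd_isUnit_iff).mpr this)
end

section
/- Let f be a nonconstant polynomial in F₂[x] with gcd(x·(x+1), f) = 1, and let R = F₂[x]/(f). Then D(S_R) = D(U(S_R)), i.e., the Davenport constant of the multiplicative monoid of R equals the Davenport constant of its unit group. -/
open Polynomial

/-- The Davenport constant of a finite abelian group. -/
noncomputable def DavG (G : Type*) [CommGroup G] : ℕ :=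
  sInf {n : ℕ | ∀ l : List G, n ≤ l.length → ∃ t : List G, t.Sublist l ∧ t ≠ [] ∧ t.prod = 1}

/-- The semigroup Davenport constant of a commutative monoid. -/
noncomputable def DavM (S : Type*) [CommMonoid S] : ℕ :=
  sInf {n : ℕ | ∀ l : List S, n ≤ l.length → ∃ t : List S, t.Sublist l ∧ t ≠ l ∧ t.prod = l.prod}

/-!
In a sequence of units, the complement of a proper subsequence with the full product is a nonempty
subsequence with product one; so `D(U(S)) ≤ D(S)` for every monoid `S`, and only
`D(S_R) ≤ D(U(S_R))` needs the ring.

Write `f = ∏ p ^ e p` and take at least `D(U(S_R))` residues `a i`. Let `k p ≤ e p` be the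
`p`-adic valuation of `∏ a i` truncated at `e p`, and set aside a subfamily `E` of at most `∑ k p`
terms whose product is already divisible by every `p ^ k p`. No other term is divisible by a prime
with `k p < e p`, so each can be replaced by a unit congruent to it modulo every `p ^ (e p - k p)`.
The `∑ k p` terms of `E` are replaced by the units `1 + p ^ j * v p`, `e p - k p ≤ j < e p`, where
`v p` vanishes modulo the other prime powers and `v p ≢ 0, -1` modulo `p`; such a `v p` exists
because `X ≢ 0, 1` modulo `p`, which is where `gcd (X * (X + 1)) f = 1` enters. The exponents `j`
being distinct, no nonempty product of these units is `1` modulo `f`. Hence a product-one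
subfamily of the new family contains replaced terms outside `E`, and deleting the corresponding
`a i` does not change `∏ a i` modulo any `p ^ e p`.
-/

open Finset UniqueFactorizationMonoid

universe u

def ZeroSumBound (G : Type*) [CommMonoid G] (n : ℕ) : Prop :=
  ∀ l : List G, n ≤ l.length → ∃ t : List G, t.Sublist l ∧ t ≠ [] ∧ t.prod = 1

def ProperSublistBound (S : Type*) [CommMonoid S] (n : ℕ) : Prop :=
  ∀ l : List S, n ≤ l.length → ∃ t : List S, t.Sublist l ∧ t ≠ l ∧ t.prod = l.prod

section Monoid

variable {M : Type*} [CommMonoid M] {n : ℕ}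

theorem ProperSublistBound.zeroSumBound_units (h : ProperSublistBound M n) :
    ZeroSumBound Mˣ n := by
  classical
  intro l hl
  obtain ⟨t, ht, htl, hprod⟩ := h (l.map Units.val) (by simpa)
  obtain ⟨r, hr, rfl⟩ := List.sublist_map_iff.mp ht
  have hperm : (r ++ l.diff r).Perm l :=
    List.subperm_append_diff_self_of_count_le (List.subperm_ext_iff.mp hr.subperm)
  refine ⟨l.diff r, List.diff_sublist l r, fun hnil => htl ?_, ?_⟩
  · rw [hr.eq_of_length (by simpa [hnil] using hperm.length_eq)]
  · have hrl : r.prod = l.prod := Units.ext <| (map_list_prod (Units.coeHom M) r).trans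
      (hprod.trans (map_list_prod (Units.coeHom M) l).symm)
    simpa [hrl] using hperm.prod_eq

theorem ZeroSumBound.exists_subset_prod_eq_one (h : ZeroSumBound Mˣ n) {ι : Type*}
    (s : Finset ι) (x : ι → M) (hx : ∀ i ∈ s, IsUnit (x i)) (hs : n ≤ #s) :
    ∃ t ⊆ s, t.Nonempty ∧ ∏ i ∈ t, x i = 1 := by
  classical
  let y : ι → Mˣ := fun i => if hi : IsUnit (x i) then hi.unit else 1
  obtain ⟨l, hl, hne, hprod⟩ := h (s.toList.map y) (by simpa)
  obtain ⟨r, hr, rfl⟩ := List.sublist_map_iff.mp hl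
  have hrs : ∀ i ∈ r.toFinset, i ∈ s := fun i hi => by
    simpa using hr.subset (List.mem_toFinset.mp hi)
  refine ⟨r.toFinset, hrs, by simpa [List.toFinset_nonempty_iff] using hne, ?_⟩
  rw [prod_congr rfl fun i hi => (by simp [y, hx i (hrs i hi)] : x i = y i), ← Units.coe_prod,
    List.prod_toFinset _ (hr.nodup s.nodup_toList), hprod, Units.val_one]

theorem properSublistBound_of_forall_fin
    (h : ∀ m (x : Fin m → M), n ≤ m →
      ∃ t : Finset (Fin m), t.Nonempty ∧ ∏ i ∈ tᶜ, x i = ∏ i, x i) :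
    ProperSublistBound M n := by
  intro l hl
  obtain ⟨t, hne, hprod⟩ := h l.length l.get hl
  let L := (List.finRange l.length).filter (· ∉ t)
  have hL : L.Nodup := (List.nodup_finRange _).filter _
  have hLt : L.toFinset = tᶜ := by ext; simp [L]
  refine ⟨L.map l.get, ?_, fun h => ?_, ?_⟩
  · simpa only [List.map_get_finRange] using
      (List.filter_sublist (l := List.finRange l.length)).map l.get
  · have hlen : #tᶜ = Fintype.card (Fin l.length) := by
      rw [← hLt, List.toFinset_card_of_nodup hL, ← List.length_map l.get, h, Fintype.card_fin]
    exact hne.ne_empty ((compl_eq_univ_iff t).mp (eq_univ_of_card _ hlen))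
  · rw [← List.prod_toFinset _ hL, hLt, hprod, ← List.prod_ofFn, List.ofFn_get]

theorem not_dvd_of_mem_sdiff {ι : Type*} [DecidableEq ι] {s E : Finset ι} {a : ι → M} {p : M}
    {k : ℕ} (hEs : E ⊆ s) (hE : p ^ k ∣ ∏ i ∈ E, a i) (hs : ¬ p ^ (k + 1) ∣ ∏ i ∈ s, a i)
    {i : ι} (hi : i ∈ s \ E) : ¬ p ∣ a i := by
  obtain ⟨his, hiE⟩ := mem_sdiff.mp hi
  refine fun hpi => hs ?_
  calc p ^ (k + 1) = p ^ k * p := pow_succ p k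
    _ ∣ (∏ i ∈ E, a i) * a i := mul_dvd_mul hE hpi
    _ = ∏ i ∈ insert i E, a i := by rw [prod_insert hiE, mul_comm]
    _ ∣ ∏ i ∈ s, a i := prod_dvd_prod_of_subset _ _ _ (insert_subset his hEs)

end Monoid

section CommRing

variable {R : Type*} [CommRing R] {ι : Type*} {d : R} {s : Finset ι}

theorem dvd_prod_sub_prod {F G : ι → R} (h : ∀ i ∈ s, d ∣ F i - G i) :
    d ∣ ∏ i ∈ s, F i - ∏ i ∈ s, G i := by
  simp_rw [← Ideal.mem_span_singleton, ← Ideal.Quotient.eq, map_prod] at h ⊢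
  exact prod_congr rfl h

theorem dvd_prod_sub_one {F : ι → R} (h : ∀ i ∈ s, d ∣ F i - 1) : d ∣ ∏ i ∈ s, F i - 1 := by
  simpa using dvd_prod_sub_prod (G := 1) h

theorem dvd_sub_one_of_dvd_mul_sub_one {x y : R} (h : d ∣ x * y - 1) (hy : d ∣ y - 1) :
    d ∣ x - 1 := by
  simpa [mul_sub] using dvd_sub h (hy.mul_left x)

theorem IsCoprime.exists_dvd_sub {g h : R} (hgh : IsCoprime g h) (x y : R) :
    ∃ z, g ∣ z - x ∧ h ∣ z - y := by
  obtain ⟨u, v, huv⟩ := hgh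
  exact ⟨y * u * g + x * v * h, ⟨(y - x) * u, by linear_combination x * huv⟩,
    ⟨(x - y) * v, by linear_combination y * huv⟩⟩

theorem Prime.not_dvd_of_dvd_sub_one {p x : R} (hp : Prime p) (h : p ∣ x - 1) : ¬ p ∣ x :=
  fun hx => hp.not_isUnit (isUnit_of_dvd_one (by simpa using dvd_sub hx h))

end CommRing

section Domain

variable {R : Type*} [CommRing R] [IsDomain R] {p : R}

theorem Prime.exists_subset_card_le_pow_dvd_prod (hp : Prime p) {ι : Type*} [DecidableEq ι]
    {s : Finset ι} {a : ι → R} {k : ℕ} (h : p ^ k ∣ ∏ i ∈ s, a i) :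
    ∃ t ⊆ s, #t ≤ k ∧ p ^ k ∣ ∏ i ∈ t, a i := by
  induction k generalizing a with
  | zero => exact ⟨∅, empty_subset s, by simp, by simp⟩
  | succ k ih =>
    obtain ⟨j, hj, c, hc⟩ := hp.exists_mem_finset_dvd ((dvd_pow_self p k.succ_ne_zero).trans h)
    have hsplit : ∀ t, j ∈ t → ∏ i ∈ t, a i = p * ∏ i ∈ t, Function.update a j c i :=
      fun t ht => by
        rw [prod_update_of_mem ht, sdiff_singleton_eq_erase, ← mul_prod_erase t a ht, hc, mul_assoc]
    rw [hsplit s hj, pow_succ', mul_dvd_mul_iff_left hp.ne_zero] at h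
    obtain ⟨t, hts, htk, ht⟩ := ih h
    refine ⟨insert j t, insert_subset hj hts, card_insert_le j t |>.trans (by omega), ?_⟩
    rw [hsplit _ (mem_insert_self j t), pow_succ']
    exact mul_dvd_mul_left p (ht.trans (prod_dvd_prod_of_subset _ _ _ (subset_insert j t)))

theorem exists_valuation_carrying_subset {P : Finset R} (hP : ∀ p ∈ P, Prime p) (e : R → ℕ)
    {ι : Type*} [DecidableEq ι] (s : Finset ι) (a : ι → R) :
    ∃ k : R → ℕ, (∀ p, k p ≤ e p) ∧ ∃ E ⊆ s, #E ≤ ∑ p ∈ P, k p ∧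
      (∀ p ∈ P, p ^ k p ∣ ∏ i ∈ E, a i) ∧ ∀ i ∈ s \ E, ∀ p ∈ P, k p < e p → ¬ p ∣ a i := by
  classical
  let k p := Nat.findGreatest (p ^ · ∣ ∏ i ∈ s, a i) (e p)
  choose! C hCs hCk hC using fun p hp => (hP p hp).exists_subset_card_le_pow_dvd_prod
    (Nat.findGreatest_spec (P := (p ^ · ∣ ∏ i ∈ s, a i)) (n := e p) (Nat.zero_le _) (by simp))
  have hE : ∀ p ∈ P, p ^ k p ∣ ∏ i ∈ P.biUnion C, a i := fun p hp =>
    (hC p hp).trans (prod_dvd_prod_of_subset _ _ _ (subset_biUnion_of_mem C hp))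
  refine ⟨k, fun p => Nat.findGreatest_le _, P.biUnion C, biUnion_subset.mpr hCs,
    card_biUnion_le.trans (sum_le_sum hCk), hE, fun i hi p hp hlt => ?_⟩
  exact not_dvd_of_mem_sdiff (biUnion_subset.mpr hCs) (hE p hp)
    (Nat.findGreatest_is_greatest (Nat.lt_succ_self _) hlt) hi

theorem Prime.not_pow_dvd_prod_one_add_pow_mul_sub_one (hp : Prime p) {v : R} (hv : ¬ p ∣ v)
    {κ : Finset ℕ} (hκ : κ.Nonempty) {N : ℕ} (hN : ∀ j ∈ κ, j < N) :
    ¬ p ^ N ∣ ∏ j ∈ κ, (1 + p ^ j * v) - 1 := by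
  set j₀ := κ.min' hκ
  have hj₀ : j₀ ∈ κ := min'_mem κ hκ
  have hrest : p ^ (j₀ + 1) ∣ ∏ j ∈ κ.erase j₀, (1 + p ^ j * v) - 1 :=
    dvd_prod_sub_one fun j hj => by
      rw [add_sub_cancel_left]
      exact (pow_dvd_pow p (min'_lt_of_mem_erase_min' κ hκ hj)).mul_right v
  intro h
  rw [← mul_prod_erase κ _ hj₀] at h
  have h₀ : p ^ (j₀ + 1) ∣ p ^ j₀ * v := by
    rw [show p ^ j₀ * v = ((1 + p ^ j₀ * v) * ∏ j ∈ κ.erase j₀, (1 + p ^ j * v) - 1)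
      - (1 + p ^ j₀ * v) * (∏ j ∈ κ.erase j₀, (1 + p ^ j * v) - 1) by ring]
    exact dvd_sub ((pow_dvd_pow p (hN j₀ hj₀)).trans h) (hrest.mul_left _)
  rw [pow_succ] at h₀
  exact hv ((mul_dvd_mul_iff_left (pow_ne_zero j₀ hp.ne_zero)).mp h₀)

end Domain

section Factorization

variable {R : Type u} [CommRing R] {P : Finset R} {e : R → ℕ} {f : R} {v : R → R}

theorem pow_dvd_of_associated_prod (hf : Associated (∏ p ∈ P, p ^ e p) f) {p : R} (hp : p ∈ P) :
    p ^ e p ∣ f :=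
  (dvd_prod_of_mem (fun p => p ^ e p) hp).trans hf.dvd

theorem dvd_of_forall_pow_dvd (hcop : (P : Set R).Pairwise IsCoprime)
    (hf : Associated (∏ p ∈ P, p ^ e p) f) {x : R} (h : ∀ p ∈ P, p ^ e p ∣ x) : f ∣ x :=
  hf.symm.dvd.trans (prod_dvd_of_coprime (hcop.mono' fun _ _ h => h.pow) h)

theorem exists_not_dvd_not_dvd_one_add_forall_pow_dvd (hcop : (P : Set R).Pairwise IsCoprime)
    {p : R} (hp : p ∈ P) {c : R} (hc : ¬ p ∣ c) (hc1 : ¬ p ∣ c - 1) :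
    ∃ v, ¬ p ∣ v ∧ ¬ p ∣ 1 + v ∧ ∀ q ∈ P, q ≠ p → q ^ e q ∣ v := by
  classical
  have hpr : IsCoprime p (∏ q ∈ P.erase p, q ^ e q) :=
    IsCoprime.prod_right fun q hq =>
      (hcop hp (mem_of_mem_erase hq) (ne_of_mem_erase hq).symm).pow_right
  obtain ⟨v, hpv, hrv⟩ := hpr.exists_dvd_sub (c - 1) 0
  refine ⟨v, fun h => hc1 ?_, fun h => hc ?_, fun q hq hqp => ?_⟩
  · simpa using dvd_sub h hpv
  · simpa [sub_sub_eq_add_sub, add_comm] using dvd_sub h hpv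
  · exact (dvd_prod_of_mem (fun q => q ^ e q) (mem_erase.mpr ⟨hqp, hq⟩)).trans (by simpa using hrv)

theorem dvd_prod_sdiff_mul_prod_sub_one (hcop : (P : Set R).Pairwise IsCoprime)
    (hf : Associated (∏ p ∈ P, p ^ e p) f) (hvq : ∀ p ∈ P, ∀ q ∈ P, q ≠ p → q ^ e q ∣ v p)
    {k : R → ℕ} (hk : ∀ p ∈ P, k p ≤ e p) {ι : Type*} [DecidableEq ι] {s S E : Finset ι}
    (hE : E ⊆ s \ S) {a b : ι → R} (hEa : ∀ p ∈ P, p ^ k p ∣ ∏ i ∈ E, a i)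
    (hb : ∀ i ∈ S, ∀ p ∈ P, p ^ (e p - k p) ∣ b i - a i) {V : Finset (Σ _ : R, ℕ)}
    (hV : V ⊆ P.sigma fun p => Ico (e p - k p) (e p))
    (h : f ∣ (∏ i ∈ S, b i) * ∏ x ∈ V, (1 + x.1 ^ x.2 * v x.1) - 1) :
    f ∣ (∏ i ∈ s \ S, a i) * (∏ i ∈ S, a i - 1) := by
  refine dvd_of_forall_pow_dvd hcop hf fun p hp => ?_
  rw [← Nat.add_sub_cancel' (hk p hp), pow_add]
  refine mul_dvd_mul ((hEa p hp).trans (prod_dvd_prod_of_subset _ _ _ hE)) ?_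
  have hV1 : p ^ (e p - k p) ∣ ∏ x ∈ V, (1 + x.1 ^ x.2 * v x.1) - 1 :=
    dvd_prod_sub_one fun ⟨q, j⟩ hx => by
      obtain ⟨hq, hj⟩ := mem_sigma.mp (hV hx)
      rw [add_sub_cancel_left]
      by_cases hqp : q = p
      · subst hqp
        exact (pow_dvd_pow q (mem_Ico.mp hj).1).mul_right _
      · exact ((pow_dvd_pow p (Nat.sub_le _ _)).trans (hvq q hq p hp (Ne.symm hqp))).mul_left _
  have hb1 : p ^ (e p - k p) ∣ ∏ i ∈ S, b i - 1 := dvd_sub_one_of_dvd_mul_sub_one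
    (((pow_dvd_pow p (Nat.sub_le _ _)).trans (pow_dvd_of_associated_prod hf hp)).trans h) hV1
  simpa using dvd_sub hb1 (dvd_prod_sub_prod fun i hi => hb i hi p hp)

variable [IsDomain R]

theorem not_dvd_prod_one_add_pow_mul_sub_one (hP : ∀ p ∈ P, Prime p)
    (hf : Associated (∏ p ∈ P, p ^ e p) f) (hv : ∀ p ∈ P, ¬ p ∣ v p)
    (hvq : ∀ p ∈ P, ∀ q ∈ P, q ≠ p → q ^ e q ∣ v p) {V : Finset (Σ _ : R, ℕ)}
    (hV : V ⊆ P.sigma fun p => range (e p)) (hne : V.Nonempty) :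
    ¬ f ∣ ∏ x ∈ V, (1 + x.1 ^ x.2 * v x.1) - 1 := by
  classical
  obtain ⟨⟨p, j⟩, hpj⟩ := hne
  have hp : p ∈ P := (mem_sigma.mp (hV hpj)).1
  intro hdvd
  have h := (pow_dvd_of_associated_prod hf hp).trans hdvd
  rw [← prod_filter_mul_prod_filter_not V (·.1 = p)] at h
  have hrest : p ^ e p ∣ ∏ x ∈ V with ¬ x.1 = p, (1 + x.1 ^ x.2 * v x.1) - 1 :=
    dvd_prod_sub_one fun x hx => by
      obtain ⟨hxV, hxp⟩ := mem_filter.mp hx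
      rw [add_sub_cancel_left]
      exact (hvq x.1 (mem_sigma.mp (hV hxV)).1 p hp (Ne.symm hxp)).mul_left _
  have hp' := dvd_sub_one_of_dvd_mul_sub_one h hrest
  have himage : ∏ x ∈ V with x.1 = p, (1 + x.1 ^ x.2 * v x.1)
      = ∏ i ∈ (V.filter (·.1 = p)).image Sigma.snd, (1 + p ^ i * v p) := by
    rw [prod_image fun x hx y hy hxy => Sigma.ext
      ((mem_filter.mp hx).2.trans (mem_filter.mp hy).2.symm) (heq_of_eq hxy)]
    exact prod_congr rfl fun x hx => by rw [(mem_filter.mp hx).2]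
  rw [himage] at hp'
  have hne : ((V.filter (·.1 = p)).image Sigma.snd).Nonempty :=
    ⟨j, mem_image.mpr ⟨⟨p, j⟩, mem_filter.mpr ⟨hpj, rfl⟩, rfl⟩⟩
  have hlt : ∀ i ∈ (V.filter (·.1 = p)).image Sigma.snd, i < e p := by
    intro i hi
    obtain ⟨⟨q, i⟩, hx, rfl⟩ := mem_image.mp hi
    obtain ⟨hxV, rfl : q = p⟩ := mem_filter.mp hx
    exact mem_range.mp (mem_sigma.mp (hV hxV)).2
  exact (hP p hp).not_pow_dvd_prod_one_add_pow_mul_sub_one (hv p hp) hne hlt hp'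

variable [IsBezout R]

theorem isCoprime_of_forall_not_dvd (hP : ∀ p ∈ P, Prime p)
    (hf : Associated (∏ p ∈ P, p ^ e p) f) {y : R} (h : ∀ p ∈ P, 0 < e p → ¬ p ∣ y) :
    IsCoprime y f := by
  obtain ⟨u, rfl⟩ := hf
  rw [isCoprime_mul_unit_right_right u.isUnit]
  refine IsCoprime.prod_right fun p hp => ?_
  rcases (e p).eq_zero_or_pos with he | he
  · simp [he, isCoprime_one_right]
  · exact ((hP p hp).irreducible.coprime_iff_not_dvd.mpr (h p hp he)).symm.pow_right

theorem exists_isCoprime_forall_pow_dvd_sub (hP : ∀ p ∈ P, Prime p)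
    (hcop : (P : Set R).Pairwise IsCoprime) (hf : Associated (∏ p ∈ P, p ^ e p) f) {k : R → ℕ}
    (hk : ∀ p ∈ P, k p ≤ e p) {x : R} (hx : ∀ p ∈ P, k p < e p → ¬ p ∣ x) :
    ∃ y, IsCoprime y f ∧ ∀ p ∈ P, p ^ (e p - k p) ∣ y - x := by
  have hgh : IsCoprime (∏ p ∈ P, p ^ (e p - k p)) (∏ p ∈ P with k p = e p, p) :=
    IsCoprime.prod_left fun p hp => IsCoprime.prod_right fun q hq => by
      obtain ⟨hqP, hkq⟩ := mem_filter.mp hq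
      by_cases hpq : p = q
      · simp [hpq, hkq, isCoprime_one_left]
      · exact (hcop hp hqP hpq).pow_left
  obtain ⟨y, hyx, hy1⟩ := hgh.exists_dvd_sub x 1
  have hyx' : ∀ p ∈ P, p ^ (e p - k p) ∣ y - x := fun p hp =>
    (dvd_prod_of_mem (fun p => p ^ (e p - k p)) hp).trans hyx
  refine ⟨y, isCoprime_of_forall_not_dvd hP hf fun p hp _ => ?_, hyx'⟩
  rcases (hk p hp).lt_or_eq with hlt | heq
  · exact fun hy => hx p hp hlt (by
      simpa using dvd_sub hy ((dvd_pow_self p (Nat.sub_ne_zero_of_lt hlt)).trans (hyx' p hp)))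
  · exact (hP p hp).not_dvd_of_dvd_sub_one
      ((dvd_prod_of_mem _ (mem_filter.mpr ⟨hp, heq⟩)).trans hy1)

theorem isCoprime_one_add_pow_mul (hP : ∀ p ∈ P, Prime p) (hf : Associated (∏ p ∈ P, p ^ e p) f)
    (hv1 : ∀ p ∈ P, ¬ p ∣ 1 + v p) (hvq : ∀ p ∈ P, ∀ q ∈ P, q ≠ p → q ^ e q ∣ v p)
    {p : R} (hp : p ∈ P) (j : ℕ) : IsCoprime (1 + p ^ j * v p) f := by
  refine isCoprime_of_forall_not_dvd hP hf fun q hq hq0 => ?_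
  by_cases hqp : q = p
  · subst hqp
    rcases j.eq_zero_or_pos with rfl | hj
    · simpa using hv1 q hq
    · refine (hP q hq).not_dvd_of_dvd_sub_one ?_
      rw [add_sub_cancel_left]
      exact (dvd_pow_self q hj.ne').mul_right _
  · refine (hP q hq).not_dvd_of_dvd_sub_one ?_
    rw [add_sub_cancel_left]
    exact ((dvd_pow_self q hq0.ne').trans (hvq p hp q hq hqp)).mul_left _

theorem exists_nonempty_dvd_prod_sdiff_mul_prod_sub_one (hP : ∀ p ∈ P, Prime p)
    (hcop : (P : Set R).Pairwise IsCoprime) (hf : Associated (∏ p ∈ P, p ^ e p) f)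
    (hres : ∀ p ∈ P, ∃ c, ¬ p ∣ c ∧ ¬ p ∣ c - 1) {n : ℕ}
    (hD : ∀ {κ : Type u} (s : Finset κ) (u : κ → R), (∀ i ∈ s, IsCoprime (u i) f) → n ≤ #s →
      ∃ t ⊆ s, t.Nonempty ∧ f ∣ ∏ i ∈ t, u i - 1)
    {ι : Type u} [DecidableEq ι] (s : Finset ι) (a : ι → R) (hs : n ≤ #s) :
    ∃ t ⊆ s, t.Nonempty ∧ f ∣ (∏ i ∈ s \ t, a i) * (∏ i ∈ t, a i - 1) := by
  choose! v hv hv1 hvq using fun p hp =>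
    have ⟨c, hc, hc1⟩ := hres p hp
    exists_not_dvd_not_dvd_one_add_forall_pow_dvd (e := e) hcop hp hc hc1
  obtain ⟨k, hk, E, hEs, hEcard, hE, hJ⟩ := exists_valuation_carrying_subset hP e s a
  choose! b hbf hb using fun i hi =>
    exists_isCoprime_forall_pow_dvd_sub hP hcop hf (fun p _ => hk p) (hJ i hi)
  let B := P.sigma fun p => Ico (e p - k p) (e p)
  let u := Sum.elim b fun x : Σ _ : R, ℕ => 1 + x.1 ^ x.2 * v x.1
  have hu : ∀ x ∈ (s \ E).disjSum B, IsCoprime (u x) f := by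
    rintro (i | x) hx
    · exact hbf i (by simpa using hx)
    · exact isCoprime_one_add_pow_mul hP hf hv1 hvq (mem_sigma.mp (inr_mem_disjSum.mp hx)).1 x.2
  have hcard : n ≤ #((s \ E).disjSum B) := by
    rw [card_disjSum, card_sigma, card_sdiff_of_subset hEs]
    simp only [Nat.card_Ico, Nat.sub_sub_self (hk _)]
    have := card_le_card hEs
    omega
  obtain ⟨T, hT, hTne, hTf⟩ := hD _ u hu hcard
  rw [← toLeft_disjSum_toRight (u := T), prod_disjSum] at hTf
  have hL : T.toLeft ⊆ s \ E := fun i hi => by simpa using hT (mem_toLeft.mp hi)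
  have hR : T.toRight ⊆ B := fun x hx => by simpa using hT (mem_toRight.mp hx)
  obtain hS | hS := T.toLeft.eq_empty_or_nonempty
  · refine absurd ?_ (not_dvd_prod_one_add_pow_mul_sub_one hP hf hv hvq (V := T.toRight)
      (fun x hx => ?_) ?_)
    · simpa [hS, u] using hTf
    · obtain ⟨hx1, hx2⟩ := mem_sigma.mp (hR hx)
      exact mem_sigma.mpr ⟨hx1, mem_range.mpr (mem_Ico.mp hx2).2⟩
    · obtain ⟨x | x, hx⟩ := hTne
      · simpa [hS] using mem_toLeft.mpr hx
      · exact ⟨x, mem_toRight.mpr hx⟩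
  · refine ⟨T.toLeft, fun i hi => (mem_sdiff.mp (hL hi)).1, hS, ?_⟩
    refine dvd_prod_sdiff_mul_prod_sub_one hcop hf hvq (fun p _ => hk p)
      (fun i hi => mem_sdiff.mpr ⟨hEs hi, fun h => (mem_sdiff.mp (hL h)).2 hi⟩) hE
      (fun i hi => hb i (hL hi)) hR (by simpa [u] using hTf)

end Factorization

section Quotient

variable {R : Type*} [CommRing R] {f : R} {n : ℕ}

theorem isUnit_mk_of_isCoprime {x : R} (h : IsCoprime x f) :
    IsUnit (Ideal.Quotient.mk (Ideal.span {f}) x) := by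
  obtain ⟨a, b, hab⟩ := h
  refine IsUnit.of_mul_eq_one (Ideal.Quotient.mk _ a) ?_
  rw [← map_mul, ← map_one (Ideal.Quotient.mk _), Ideal.Quotient.eq, Ideal.mem_span_singleton]
  exact ⟨-b, by linear_combination hab⟩

theorem ZeroSumBound.exists_subset_dvd_prod_sub_one (h : ZeroSumBound (R ⧸ Ideal.span {f})ˣ n)
    {κ : Type*} (s : Finset κ) (u : κ → R) (hu : ∀ i ∈ s, IsCoprime (u i) f) (hs : n ≤ #s) :
    ∃ t ⊆ s, t.Nonempty ∧ f ∣ ∏ i ∈ t, u i - 1 := by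
  obtain ⟨t, hts, hne, ht⟩ := h.exists_subset_prod_eq_one s (fun i => Ideal.Quotient.mk _ (u i))
    (fun i hi => isUnit_mk_of_isCoprime (hu i hi)) hs
  refine ⟨t, hts, hne, ?_⟩
  rw [← Ideal.mem_span_singleton, ← Ideal.Quotient.eq, map_prod, ht, map_one]

theorem properSublistBound_quotient
    (h : ∀ m (a : Fin m → R), n ≤ m →
      ∃ t : Finset (Fin m), t.Nonempty ∧ f ∣ (∏ i ∈ tᶜ, a i) * (∏ i ∈ t, a i - 1)) :
    ProperSublistBound (R ⧸ Ideal.span {f}) n := by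
  refine properSublistBound_of_forall_fin fun m x hm => ?_
  choose a ha using fun i => Ideal.Quotient.mk_surjective (x i)
  obtain ⟨t, hne, ht⟩ := h m a hm
  refine ⟨t, hne, ?_⟩
  simp_rw [← ha, ← map_prod]
  rw [Ideal.Quotient.eq, Ideal.mem_span_singleton, ← prod_compl_mul_prod t]
  simpa [mul_sub] using ht.neg_right

end Quotient

theorem associated_prod_pow_count_normalizedFactors {R : Type*} [CommMonoidWithZero R]
    [NormalizationMonoid R] [UniqueFactorizationMonoid R] [DecidableEq R] {f : R} (hf : f ≠ 0) :
    Associated (∏ p ∈ (normalizedFactors f).toFinset, p ^ (normalizedFactors f).count p) f := by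
  rw [← prod_multiset_count]
  exact prod_normalizedFactors hf

theorem pairwise_isCoprime_normalizedFactors {R : Type*} [CommRing R] [IsDomain R] [IsBezout R]
    [NormalizationMonoid R] [UniqueFactorizationMonoid R] [DecidableEq R] (f : R) :
    ((normalizedFactors f).toFinset : Set R).Pairwise IsCoprime := by
  intro p hp q hq hpq
  rw [mem_coe, Multiset.mem_toFinset] at hp hq
  refine (irreducible_of_normalized_factor p hp).coprime_iff_not_dvd.mpr fun hdvd => hpq ?_
  exact ((prime_of_normalized_factor p hp).associated_of_dvd (prime_of_normalized_factor q hq)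
    hdvd).eq_of_normalized (normalize_normalized_factor p hp) (normalize_normalized_factor q hq)

theorem not_dvd_X_and_not_dvd_X_sub_one {f p : (ZMod 2)[X]}
    (hgcd : EuclideanDomain.gcd (X * (X + 1)) f = 1) (hp : ¬ IsUnit p) (hpf : p ∣ f) :
    ¬ p ∣ X ∧ ¬ p ∣ X - 1 := by
  have h : ¬ p ∣ X * (X + 1) := fun h =>
    hp (isUnit_of_dvd_one (hgcd ▸ EuclideanDomain.dvd_gcd h hpf))
  rw [CharTwo.sub_eq_add]
  exact ⟨fun hX => h (hX.mul_right _), fun hX => h (hX.mul_left _)⟩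

theorem stmt10 (f : (ZMod 2)[X]) (hf : 0 < f.degree)
    (hgcd : EuclideanDomain.gcd (X * (X + 1)) f = 1) :
    DavM ((ZMod 2)[X] ⧸ Ideal.span {f}) = DavG ((ZMod 2)[X] ⧸ Ideal.span {f})ˣ := by
  have hprime : ∀ p ∈ (normalizedFactors f).toFinset, Prime p := fun p hp =>
    prime_of_normalized_factor p (Multiset.mem_toFinset.mp hp)
  have hres : ∀ p ∈ (normalizedFactors f).toFinset, ∃ c, ¬ p ∣ c ∧ ¬ p ∣ c - 1 := fun p hp =>
    ⟨X, not_dvd_X_and_not_dvd_X_sub_one hgcd (hprime p hp).not_isUnit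
      (dvd_of_mem_normalizedFactors (Multiset.mem_toFinset.mp hp))⟩
  change sInf {n | ProperSublistBound ((ZMod 2)[X] ⧸ Ideal.span {f}) n}
    = sInf {n | ZeroSumBound ((ZMod 2)[X] ⧸ Ideal.span {f})ˣ n}
  congr 1
  ext n
  refine ⟨ProperSublistBound.zeroSumBound_units, fun h => properSublistBound_quotient
    fun m a hm => ?_⟩
  simpa [compl_eq_univ_sdiff] using exists_nonempty_dvd_prod_sdiff_mul_prod_sub_one hprime
    (pairwise_isCoprime_normalizedFactors f)
    (associated_prod_pow_count_normalizedFactors (ne_zero_of_degree_gt hf)) hres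
    h.exists_subset_dvd_prod_sub_one univ a (by simpa using hm)
end

section
/- Let f ∈ F₂[x] be nonconstant, R = F₂[x]/(f), and let T = a₁,…,a_t be elements of R such that, in the multiplicative monoid, the partial products satisfy 1 >_H a₁ >_H a₁a₂ >_H ⋯ >_H a₁⋯a_t (each strict Green inequality). Then the chain of stabilizers K₀ = {1} ⊆ K₁ ⊆ ⋯ ⊆ K_t, where K_i = St(a₁⋯a_i), is increasing, and the number of indices i ∈ {0,…,t−1} with K_i = K_{i+1} is at most δ_f, where δ_f = 0, 1, or 2 according as gcd(x(x+1), f) is 1, in {x, x+1}, or x(x+1). -/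
/-!
The annihilator of `a₁⋯aᵢ` in `F₂[x]/(f)` pulls back to `(hᵢ)` with `hᵢ ∣ f`, so the stabilizer
`Kᵢ` is the congruence subgroup of units `≡ 1 mod hᵢ`, and the strict Green chain makes the `hᵢ`
strictly decreasing for divisibility. If `Kᵢ = Kᵢ₊₁` and `hᵢ = k hᵢ₊₁`, then `k ∣ w` whenever
`1 + hᵢ₊₁ w` is prime to `f`. For a prime `q ∣ k` and `r` the prime-to-`q` part of `f`, taking
`w = r z` shows `q ∣ 1 + hᵢ₊₁ r z` for every `z ∉ (q)`; comparing `z = 1` and `z = x` forces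
`q ∈ {x, x + 1}` and `q ∤ hᵢ₊₁`. Hence distinct stalls use up distinct linear factors of `f`.
-/

open Polynomial

section Annihilator

variable {R : Type*} [CommRing R]

def IsAnnihilatorGenerator {I : Ideal R} (c : R ⧸ I) (h : R) : Prop :=
  ∀ w, Ideal.Quotient.mk I w * c = 0 ↔ h ∣ w

theorem exists_isAnnihilatorGenerator [IsPrincipalIdealRing R] {I : Ideal R} (c : R ⧸ I) :
    ∃ h, IsAnnihilatorGenerator c h :=
  ⟨Submodule.IsPrincipal.generator (Submodule.span R {c}).annihilator, fun w => by
    rw [← Submodule.IsPrincipal.mem_iff_generator_dvd, Submodule.mem_annihilator_span_singleton,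
      Algebra.smul_def, Ideal.Quotient.algebraMap_eq]⟩

namespace IsAnnihilatorGenerator

variable {I : Ideal R} {c c' : R ⧸ I} {h h' : R}

theorem dvd_of_mem (hc : IsAnnihilatorGenerator c h) {x : R} (hx : x ∈ I) : h ∣ x :=
  (hc x).1 (by rw [Ideal.Quotient.eq_zero_iff_mem.2 hx, zero_mul])

theorem dvd_of_dvd (hc : IsAnnihilatorGenerator c h) (hc' : IsAnnihilatorGenerator c' h')
    (hcc' : c ∣ c') : h' ∣ h := by
  obtain ⟨t, rfl⟩ := hcc'
  exact (hc' h).1 (by rw [← mul_assoc, (hc h).2 dvd_rfl, zero_mul])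

end IsAnnihilatorGenerator

end Annihilator

section EuclideanDomain

variable {R : Type*} [EuclideanDomain R]

local notation "π" f => Ideal.Quotient.mk (Ideal.span {f})

theorem mk_mul_eq_zero_iff {f g h : R} (hfg : f = g * h) (hh : h ≠ 0) (w : R) :
    (π f) w * (π f) h = 0 ↔ g ∣ w := by
  rw [← map_mul, Ideal.Quotient.eq_zero_iff_dvd, hfg, mul_dvd_mul_iff_right hh]

theorem dvd_of_forall_mul_eq_zero_imp {f : R} (hf : f ≠ 0) {c c' : R ⧸ Ideal.span {f}}
    (hcc' : ∀ x, x * c = 0 → x * c' = 0) : c ∣ c' := by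
  classical
  obtain ⟨p, rfl⟩ := Ideal.Quotient.mk_surjective c
  obtain ⟨p', rfl⟩ := Ideal.Quotient.mk_surjective c'
  -- `(p) = (gcd p f)` in `R ⧸ (f)`, and the cofactor of `gcd p f` in `f` annihilates `p`.
  obtain ⟨h, hfg⟩ := EuclideanDomain.gcd_dvd_right p f
  obtain ⟨t, hpg⟩ := EuclideanDomain.gcd_dvd_left p f
  have hh : h ≠ 0 := by rintro rfl; exact hf (by rw [hfg, mul_zero])
  have hg : (π f) (EuclideanDomain.gcd p f) = (π f) p * (π f) (EuclideanDomain.gcdA p f) := by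
    rw [EuclideanDomain.gcd_eq_gcd_ab, map_add, map_mul, map_mul,
      Ideal.Quotient.eq_zero_iff_dvd f f |>.2 dvd_rfl, zero_mul, add_zero]
  have hann : (π f) h * (π f) p = 0 := by
    rw [hpg, map_mul, ← mul_assoc, mul_comm ((π f) h),
      (mk_mul_eq_zero_iff hfg hh _).2 dvd_rfl, zero_mul]
  obtain ⟨s, rfl⟩ := (mk_mul_eq_zero_iff hfg hh p').1 (by rw [mul_comm]; exact hcc' _ hann)
  rw [map_mul, hg, mul_assoc]
  exact dvd_mul_right _ _

theorem IsAnnihilatorGenerator.dvd_iff_dvd {f h h' : R} (hf : f ≠ 0)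
    {c c' : R ⧸ Ideal.span {f}} (hc : IsAnnihilatorGenerator c h)
    (hc' : IsAnnihilatorGenerator c' h') : c ∣ c' ↔ h' ∣ h := by
  refine ⟨hc.dvd_of_dvd hc', fun hhh' => dvd_of_forall_mul_eq_zero_imp hf fun x hx => ?_⟩
  obtain ⟨w, rfl⟩ := Ideal.Quotient.mk_surjective x
  exact (hc' w).2 (hhh'.trans ((hc w).1 hx))

theorem isUnit_mk_of_isCoprime_s13 {f v : R} (hv : IsCoprime v f) : IsUnit ((π f) v) := by
  obtain ⟨a, b, hab⟩ := hv
  refine IsUnit.of_mul_eq_one ((π f) a) ?_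
  have h := congrArg (π f) hab
  rwa [map_add, map_mul, map_mul, Ideal.Quotient.eq_zero_iff_dvd f f |>.2 dvd_rfl, mul_zero,
    add_zero, map_one, mul_comm] at h

theorem IsAnnihilatorGenerator.dvd_of_isCoprime {f h' k : R} (hf : f ≠ 0)
    {c c' : R ⧸ Ideal.span {f}} (hc : IsAnnihilatorGenerator c (h' * k))
    (hc' : IsAnnihilatorGenerator c' h')
    (hst : ∀ u : (R ⧸ Ideal.span {f})ˣ, ↑u * c' = c' → ↑u * c = c) {w : R}
    (hw : IsCoprime (1 + h' * w) f) : k ∣ w := by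
  have hh' : h' ≠ 0 := by
    rintro rfl; exact hf (zero_dvd_iff.1 (hc'.dvd_of_mem (Ideal.mem_span_singleton_self f)))
  set u := (isUnit_mk_of_isCoprime_s13 hw).unit
  have hu : (u : R ⧸ Ideal.span {f}) - 1 = (π f) (h' * w) := by
    rw [IsUnit.unit_spec, map_add, map_one, add_sub_cancel_left]
  have hfix : ∀ {d : R ⧸ Ideal.span {f}}, ↑u * d = d ↔ (π f) (h' * w) * d = 0 := by
    intro d; rw [← hu, sub_mul, one_mul, sub_eq_zero]
  have := (hc (h' * w)).1 (hfix.1 (hst u (hfix.2 ((hc' _).2 (dvd_mul_right _ _)))))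
  exact (mul_dvd_mul_iff_left hh').1 this

theorem isCoprime_one_add_of_not_dvd {q r f a : R} {m : ℕ} (hq : Prime q) (hf : f = q ^ m * r)
    (hra : r ∣ a) (hqa : ¬ q ∣ 1 + a) : IsCoprime (1 + a) f := by
  obtain ⟨t, rfl⟩ := hra
  rw [hf]
  exact (((hq.coprime_iff_not_dvd).2 hqa).pow_left).symm.mul_right ⟨1, -t, by ring⟩

/-- The witness is `a = d r` with `r` the prime-to-`q` part of `f`. -/
theorem exists_forall_dvd_one_add_mul {f d k q : R} (hf : f ≠ 0) (hq : Prime q) (hqk : q ∣ k)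
    (hk : ∀ w, IsCoprime (1 + d * w) f → k ∣ w) :
    ∃ a, d ∣ a ∧ ∀ z, ¬ q ∣ z → q ∣ 1 + a * z := by
  obtain ⟨m, r, hqr, hfr⟩ := WfDvdMonoid.max_power_factor hf hq.irreducible
  refine ⟨d * r, dvd_mul_right _ _, fun z hqz => by_contra fun hqv => ?_⟩
  have hcop := isCoprime_one_add_of_not_dvd hq hfr ⟨d * z, by ring⟩ hqv
  rw [mul_assoc] at hcop
  rcases hq.dvd_or_dvd (hqk.trans (hk _ hcop)) with h | h
  exacts [hqr h, hqz h]

end EuclideanDomain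

section Linear

theorem X_add_one_irreducible : Irreducible (X + 1 : (ZMod 2)[X]) := by
  simpa using irreducible_of_degree_eq_one (degree_X_add_C (1 : ZMod 2))

theorem not_X_add_one_dvd_X : ¬ (X + 1 : (ZMod 2)[X]) ∣ X := fun h => by
  simpa [show (1 + 1 : ZMod 2) = 0 from rfl] using eval_dvd (x := 1) h

theorem not_X_dvd_X_add_one : ¬ (X : (ZMod 2)[X]) ∣ X + 1 := fun h => by
  simpa using eval_dvd (x := 0) h

theorem dvd_X_or_dvd_X_add_one {q a : (ZMod 2)[X]} (hq : Prime q)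
    (h : ∀ z, ¬ q ∣ z → q ∣ 1 + a * z) : q ∣ X ∨ q ∣ X + 1 := by
  refine or_iff_not_imp_left.2 fun hqX => ?_
  have h1 := h 1 hq.not_dvd_one
  have hsum : (1 + a * 1) + (1 + a * X) = a * (X + 1) := by
    linear_combination CharTwo.add_self_eq_zero (1 : (ZMod 2)[X])
  rcases hq.dvd_or_dvd (hsum ▸ dvd_add h1 (h X hqX)) with ha | hX1
  · exact absurd ((dvd_add_right (ha.mul_right 1)).1 (by rwa [add_comm] at h1)) hq.not_dvd_one
  · exact hX1

theorem exists_linear_dvd_not_dvd {f d k : (ZMod 2)[X]} (hf : f ≠ 0) (hk : ¬ IsUnit k)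
    (hk0 : k ≠ 0) (hst : ∀ w, IsCoprime (1 + d * w) f → k ∣ w) :
    ∃ q ∈ ({X, X + 1} : Finset (ZMod 2)[X]), q ∣ k ∧ ¬ q ∣ d := by
  obtain ⟨p, hp, hpk⟩ := WfDvdMonoid.exists_irreducible_factor hk hk0
  obtain ⟨a, hda, ha⟩ := exists_forall_dvd_one_add_mul hf hp.prime hpk hst
  have hpd : ¬ p ∣ d := fun hpd => hp.prime.not_dvd_one <|
    (dvd_add_left ((hpd.trans hda).mul_right 1)).1 (ha 1 hp.prime.not_dvd_one)
  obtain ⟨q, hq, hpq⟩ : ∃ q ∈ ({X, X + 1} : Finset (ZMod 2)[X]), Associated p q := by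
    rcases dvd_X_or_dvd_X_add_one hp.prime ha with h | h
    exacts [⟨X, by simp, hp.associated_of_dvd irreducible_X h⟩,
      ⟨X + 1, by simp, hp.associated_of_dvd X_add_one_irreducible h⟩]
  exact ⟨q, hq, hpq.dvd_iff_dvd_left.1 hpk, mt hpq.dvd_iff_dvd_left.2 hpd⟩

theorem exists_linear_dvd_of_stabilizer_eq {f h h' : (ZMod 2)[X]} (hf : f ≠ 0)
    {c c' : (ZMod 2)[X] ⧸ Ideal.span {f}} (hc : IsAnnihilatorGenerator c h)
    (hc' : IsAnnihilatorGenerator c' h') (hcc' : c ∣ c') (hc'c : ¬ c' ∣ c)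
    (hst : ∀ u : ((ZMod 2)[X] ⧸ Ideal.span {f})ˣ, ↑u * c' = c' → ↑u * c = c) :
    ∃ q ∈ ({X, X + 1} : Finset (ZMod 2)[X]), q ∣ h ∧ ¬ q ∣ h' := by
  obtain ⟨k, rfl⟩ := (hc.dvd_iff_dvd hf hc').1 hcc'
  have hk : ¬ IsUnit k := fun hk =>
    hc'c ((hc'.dvd_iff_dvd hf hc).2 (hk.mul_right_dvd.2 dvd_rfl))
  have hk0 : k ≠ 0 := by
    rintro rfl
    simpa [hf] using hc.dvd_of_mem (Ideal.mem_span_singleton_self f)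
  obtain ⟨q, hq, hqk, hqh'⟩ :=
    exists_linear_dvd_not_dvd hf hk hk0 fun _ => hc.dvd_of_isCoprime hf hc' hst
  exact ⟨q, hq, hqk.mul_left h', hqh'⟩

open scoped Classical in
theorem card_filter_dvd_le (g : (ZMod 2)[X]) :
    (({X, X + 1} : Finset (ZMod 2)[X]).filter (· ∣ g)).card ≤
      if g = 1 then 0 else if g = X ∨ g = X + 1 then 1 else 2 := by
  split_ifs with h1 hX
  · subst h1
    simp [irreducible_X.not_dvd_one, X_add_one_irreducible.not_dvd_one]
  · rcases hX with rfl | rfl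
    · rw [Finset.filter_insert, if_pos dvd_rfl, Finset.filter_singleton,
        if_neg not_X_add_one_dvd_X]
      simp
    · rw [Finset.filter_insert, if_neg not_X_dvd_X_add_one, Finset.filter_singleton,
        if_pos dvd_rfl]
      simp
  · exact (Finset.card_filter_le _ _).trans Finset.card_le_two

end Linear

theorem card_le_of_forall_exists_dvd_not_dvd {M : Type*} [Monoid M] {h : ℕ → M}
    (hanti : ∀ i j, i ≤ j → h j ∣ h i) {S : Finset ℕ} {T : Finset M}
    (hS : ∀ i ∈ S, ∃ q ∈ T, q ∣ h i ∧ ¬ q ∣ h (i + 1)) : S.card ≤ T.card := by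
  choose! φ hφT hφ using hS
  have hne : ∀ a ∈ S, ∀ b ∈ S, a < b → φ a ≠ φ b := fun a ha b hb hab heq =>
    (hφ a ha).2 (heq ▸ (hφ b hb).1.trans (hanti _ _ hab))
  refine Finset.card_le_card_of_injOn φ hφT fun a ha b hb hab => ?_
  rcases lt_trichotomy a b with h | h | h
  exacts [absurd hab (hne a ha b hb h), h, absurd hab.symm (hne b hb a ha h)]

open scoped Classical in
theorem stmt13 (f : (ZMod 2)[X]) (hf : 0 < f.degree)
    (l : List ((ZMod 2)[X] ⧸ Ideal.span {f}))
    (hchain : ∀ i < l.length,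
      ((l.take (i + 1)).prod = (l.take i).prod ∨
        ∃ c, (l.take (i + 1)).prod = (l.take i).prod * c) ∧
      ¬ ((l.take i).prod = (l.take (i + 1)).prod ∨
        ∃ c, (l.take i).prod = (l.take (i + 1)).prod * c)) :
    (∀ i < l.length,
      {u : ((ZMod 2)[X] ⧸ Ideal.span {f})ˣ |
          (u : (ZMod 2)[X] ⧸ Ideal.span {f}) * (l.take i).prod = (l.take i).prod} ⊆
        {u : ((ZMod 2)[X] ⧸ Ideal.span {f})ˣ |
          (u : (ZMod 2)[X] ⧸ Ideal.span {f}) * (l.take (i + 1)).prod = (l.take (i + 1)).prod}) ∧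
    ((Finset.range l.length).filter (fun i =>
        {u : ((ZMod 2)[X] ⧸ Ideal.span {f})ˣ |
            (u : (ZMod 2)[X] ⧸ Ideal.span {f}) * (l.take i).prod = (l.take i).prod} =
          {u : ((ZMod 2)[X] ⧸ Ideal.span {f})ˣ |
            (u : (ZMod 2)[X] ⧸ Ideal.span {f}) * (l.take (i + 1)).prod =
              (l.take (i + 1)).prod})).card ≤
      (if EuclideanDomain.gcd (X * (X + 1)) f = 1 then 0
       else if EuclideanDomain.gcd (X * (X + 1)) f = X ∨
                EuclideanDomain.gcd (X * (X + 1)) f = X + 1 then 1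
       else 2) := by
  refine ⟨fun i hi u (hu : _ = _) => ?_, ?_⟩
  · show _ = _
    rw [List.prod_take_succ l i hi, ← mul_assoc, hu]
  have hf0 : f ≠ 0 := ne_zero_of_degree_gt hf
  have hdvd : ∀ i j, i ≤ j → (l.take i).prod ∣ (l.take j).prod := fun i j hij =>
    (List.take_sublist_take_left hij).prod_dvd_prod
  choose h hh using fun i => exists_isAnnihilatorGenerator (l.take i).prod
  have hanti : ∀ i j, i ≤ j → h j ∣ h i := fun i j hij =>
    (hh i).dvd_of_dvd (hh j) (hdvd i j hij)
  refine (card_le_of_forall_exists_dvd_not_dvd hanti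
    (T := ({X, X + 1} : Finset _).filter (· ∣ EuclideanDomain.gcd (X * (X + 1)) f))
    fun i hi => ?_).trans (card_filter_dvd_le _)
  obtain ⟨hi, hst⟩ := Finset.mem_filter.1 hi
  obtain ⟨q, hq, hqh, hqh'⟩ := exists_linear_dvd_of_stabilizer_eq hf0 (hh i) (hh (i + 1))
    (hdvd i (i + 1) i.le_succ)
    (fun ⟨t, ht⟩ => (hchain i (Finset.mem_range.1 hi)).2 (.inr ⟨t, ht⟩))
    fun u hu => (Set.ext_iff.1 hst u).2 hu
  have hqX : q ∣ X * (X + 1) := by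
    rcases Finset.mem_insert.1 hq with rfl | hq
    · exact dvd_mul_right _ _
    · exact (Finset.mem_singleton.1 hq) ▸ dvd_mul_left _ _
  exact ⟨q, Finset.mem_filter.2 ⟨hq, EuclideanDomain.dvd_gcd hqX
    (hqh.trans ((hh i).dvd_of_mem (Ideal.mem_span_singleton_self f)))⟩, hqh, hqh'⟩
end

section
/- Let f ∈ F₂[x] be nonconstant and R = F₂[x]/(f). For elements a, b of the multiplicative monoid of R, a is Green-equivalent to b (a H b) if and only if gcd(θ_a, f) = gcd(θ_b, f) as monic polynomials in F₂[x]. -/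
open Polynomial

private lemma mk_dvd_iff (f θa θb : (ZMod 2)[X]) :
    Ideal.Quotient.mk (Ideal.span {f}) θb ∣ Ideal.Quotient.mk (Ideal.span {f}) θa ↔
      EuclideanDomain.gcd θb f ∣ θa := by
  constructor
  · rintro ⟨c, hc⟩
    obtain ⟨γ, rfl⟩ := Ideal.Quotient.mk_surjective c
    rw [← map_mul, Ideal.Quotient.eq, Ideal.mem_span_singleton] at hc
    obtain ⟨d, hd⟩ := hc
    have h : θa = θb * γ + f * d := by linear_combination hd
    rw [h]
    exact dvd_add (Dvd.dvd.mul_right (EuclideanDomain.gcd_dvd_left θb f) _)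
      (Dvd.dvd.mul_right (EuclideanDomain.gcd_dvd_right θb f) _)
  · rintro ⟨w, hw⟩
    have h := EuclideanDomain.gcd_eq_gcd_ab θb f
    refine ⟨Ideal.Quotient.mk _ (EuclideanDomain.gcdA θb f * w), ?_⟩
    rw [← map_mul, Ideal.Quotient.eq, Ideal.mem_span_singleton]
    refine ⟨EuclideanDomain.gcdB θb f * w, ?_⟩
    rw [hw, h]; ring

private lemma eq_of_dvd_dvd {p q : (ZMod 2)[X]} (h1 : p ∣ q) (h2 : q ∣ p) : p = q := by
  obtain ⟨u, hu⟩ := (associated_of_dvd_dvd h1 h2)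
  obtain ⟨r, hr, hru⟩ := Polynomial.isUnit_iff.mp u.isUnit
  have hall : ∀ s : ZMod 2, s ≠ 0 → s = 1 := by decide
  have : r = 1 := hall r (by simpa using hr.ne_zero)
  rw [← hu, ← hru, this]
  simp

theorem stmt18 (f θa θb : (ZMod 2)[X]) (hf : 0 < f.degree)
    (a b : (ZMod 2)[X] ⧸ Ideal.span {f})
    (ha : Ideal.Quotient.mk (Ideal.span {f}) θa = a)
    (hb : Ideal.Quotient.mk (Ideal.span {f}) θb = b) :
    ((a = b ∨ ∃ c, a = b * c) ∧ (b = a ∨ ∃ c, b = a * c)) ↔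
      EuclideanDomain.gcd θa f = EuclideanDomain.gcd θb f := by
  subst ha hb
  have key : ∀ u v : (ZMod 2)[X],
      ((Ideal.Quotient.mk (Ideal.span {f}) u = Ideal.Quotient.mk (Ideal.span {f}) v ∨
        ∃ c, Ideal.Quotient.mk (Ideal.span {f}) u = Ideal.Quotient.mk (Ideal.span {f}) v * c)
        ↔ EuclideanDomain.gcd v f ∣ EuclideanDomain.gcd u f) := by
    intro u v
    rw [← mk_dvd_iff f (EuclideanDomain.gcd u f) v]
    constructor
    · rintro (h | ⟨c, hc⟩)
      · have : Ideal.Quotient.mk (Ideal.span {f}) v ∣ Ideal.Quotient.mk (Ideal.span {f}) u := by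
          rw [h]
        rw [mk_dvd_iff] at this ⊢
        exact EuclideanDomain.dvd_gcd this (EuclideanDomain.gcd_dvd_right v f)
      · have : Ideal.Quotient.mk (Ideal.span {f}) v ∣ Ideal.Quotient.mk (Ideal.span {f}) u :=
          ⟨c, hc⟩
        rw [mk_dvd_iff] at this ⊢
        exact EuclideanDomain.dvd_gcd this (EuclideanDomain.gcd_dvd_right v f)
    · intro h
      rw [mk_dvd_iff] at h
      have hu : EuclideanDomain.gcd v f ∣ u := h.trans (EuclideanDomain.gcd_dvd_left u f)
      rw [← mk_dvd_iff f u v] at hu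
      obtain ⟨c, hc⟩ := hu
      exact Or.inr ⟨c, hc⟩
  rw [key θa θb, key θb θa]
  constructor
  · rintro ⟨h1, h2⟩
    exact eq_of_dvd_dvd h2 h1
  · intro h
    rw [h]
    exact ⟨dvd_refl _, dvd_refl _⟩
end

section
/- Let S be a finite commutative monoid and T a sequence of elements of S. Then there exists a subsequence V of T, of minimal length, such that the product of V is Green-equivalent (H-equivalent) to the product of T; moreover for such a minimal V = a₁⋯a_t, the partial products form a strictly decreasing chain in the Green preorder: 1 >_H a₁ >_H a₁a₂ >_H ⋯ >_H a₁⋯a_t. -/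
/-- Green's preorder on a commutative monoid: `greenLe a b` iff `a = b` or `a = b * c`. -/
def greenLe {S : Type*} [CommMonoid S] (a b : S) : Prop := a = b ∨ ∃ c, a = b * c

/-- Green's equivalence: each element is `≤` the other in the Green preorder. -/
def greenEq {S : Type*} [CommMonoid S] (a b : S) : Prop := greenLe a b ∧ greenLe b a

lemma greenLe_refl {S : Type*} [CommMonoid S] (a : S) : greenLe a a := Or.inl rfl

lemma greenLe_mul_right {S : Type*} [CommMonoid S] {a b : S} (h : greenLe a b) (c : S) :
    greenLe (a * c) (b * c) := by
  rcases h with rfl | ⟨d, rfl⟩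
  · exact Or.inl rfl
  · exact Or.inr ⟨d, by rw [mul_right_comm]⟩

lemma greenEq_refl {S : Type*} [CommMonoid S] (a : S) : greenEq a a :=
  ⟨greenLe_refl a, greenLe_refl a⟩

lemma greenLe_trans {S : Type*} [CommMonoid S] {a b c : S}
    (h1 : greenLe a b) (h2 : greenLe b c) : greenLe a c := by
  rcases h1 with rfl | ⟨d, rfl⟩ <;> rcases h2 with rfl | ⟨e, rfl⟩
  · exact Or.inl rfl
  · exact Or.inr ⟨e, rfl⟩
  · exact Or.inr ⟨d, rfl⟩
  · exact Or.inr ⟨e * d, by rw [← mul_assoc, mul_right_comm]⟩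

lemma greenEq_trans {S : Type*} [CommMonoid S] {a b c : S}
    (h1 : greenEq a b) (h2 : greenEq b c) : greenEq a c :=
  ⟨greenLe_trans h1.1 h2.1, greenLe_trans h2.2 h1.2⟩

lemma greenEq_mul_right {S : Type*} [CommMonoid S] {a b : S} (h : greenEq a b) (c : S) :
    greenEq (a * c) (b * c) := ⟨greenLe_mul_right h.1 c, greenLe_mul_right h.2 c⟩

theorem stmt19 (S : Type*) [CommMonoid S] [Fintype S] (T : List S) :
    (∃ V : List S, V.Sublist T ∧ greenEq V.prod T.prod ∧
      ∀ W : List S, W.Sublist T → greenEq W.prod T.prod → V.length ≤ W.length) ∧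
    (∀ V : List S, V.Sublist T → greenEq V.prod T.prod →
      (∀ W : List S, W.Sublist T → greenEq W.prod T.prod → V.length ≤ W.length) →
      ∀ i < V.length,
        greenLe ((V.take (i + 1)).prod) ((V.take i).prod) ∧
        ¬ greenLe ((V.take i).prod) ((V.take (i + 1)).prod)) := by
  constructor
  · -- existence of a minimal witness
    have hne : ∃ n : ℕ, ∃ V : List S, V.Sublist T ∧ greenEq V.prod T.prod ∧ V.length = n :=
      ⟨T.length, T, List.Sublist.refl T, greenEq_refl _, rfl⟩
    classical
    obtain ⟨V, hVsub, hVeq, hVlen⟩ := Nat.find_spec hne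
    refine ⟨V, hVsub, hVeq, fun W hWsub hWeq => ?_⟩
    rw [hVlen]
    exact Nat.find_min' hne ⟨W, hWsub, hWeq, rfl⟩
  · intro V hVsub hVeq hVmin i hi
    have htake : (V.take (i + 1)).prod = (V.take i).prod * V.get ⟨i, hi⟩ :=
      List.prod_take_succ V i hi
    constructor
    · rw [htake]; exact Or.inr ⟨V.get ⟨i, hi⟩, rfl⟩
    · intro hle
      -- then erasing the i-th element gives a shorter witness
      have heq : greenEq ((V.take i).prod) ((V.take (i + 1)).prod) :=
        ⟨hle, by rw [htake]; exact Or.inr ⟨V.get ⟨i, hi⟩, rfl⟩⟩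
      have hWsub : (V.eraseIdx i).Sublist T :=
        (List.eraseIdx_sublist V i).trans hVsub
      have hWprod : (V.eraseIdx i).prod = (V.take i).prod * (V.drop (i + 1)).prod := by
        rw [List.eraseIdx_eq_take_drop_succ, List.prod_append]
      have hVprod : V.prod = (V.take (i + 1)).prod * (V.drop (i + 1)).prod := by
        conv_lhs => rw [← List.take_append_drop (i + 1) V]
        rw [List.prod_append]
      have hWeq : greenEq ((V.eraseIdx i).prod) T.prod := by
        refine greenEq_trans ?_ hVeq
        rw [hWprod, hVprod]
        exact greenEq_mul_right heq _
      have hlen := hVmin (V.eraseIdx i) hWsub hWeq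
      rw [List.length_eraseIdx] at hlen
      simp only [hi, if_pos] at hlen
      omega
end
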